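/- Let c ∈ ℝ. For integers n ≥ 1 define ψ_n(x) := (n² + c²)^{−1/2} √(2/π) (n cos(nx) + c sin(nx)) on [0,π]. Then the family {ψ_n}_{n≥1} is orthonormal in L²((0,π)): for all m, n ≥ 1, ∫₀^π ψ_n(x) ψ_m(x) dx equals 1 if n = m and 0 otherwise. -/

import Mathlib

/-!
`ψ_n` is the normalisation of `A sin(n·)` with `A = ∂ₓ + c`. Since `u = sin(n·)` vanishes at `0`
and `π`, integrating by parts gives `∫ (Au)(Av) = ∫ u (-v'' + c² v)`, and `-v'' = m² v` for
`v = sin(m·)`. So `∫ ψ_n ψ_m` is a multiple of `∫ sin(n·) sin(m·)`, and orthogonality of the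
Dirichlet sines follows from the same identity with `c = 0`, read both ways: `(n² - m²) ∫ uv = 0`.
-/

noncomputable section

/-- The Robin eigenfunctions `ψ_n = (n²+c²)^{-1/2} A φ_n^D` on `[0,π]`. -/
def robinEigen (c : ℝ) (n : ℕ) (x : ℝ) : ℝ :=
  (Real.sqrt ((n : ℝ) ^ 2 + c ^ 2))⁻¹ * Real.sqrt (2 / Real.pi) *
    ((n : ℝ) * Real.cos ((n : ℝ) * x) + c * Real.sin ((n : ℝ) * x))

open Real intervalIntegral

section IntegrationByParts

variable {u u' v v' : ℝ → ℝ} {a b μ : ℝ}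

theorem integral_deriv_mul_deriv_eq_mul_integral_mul
    (hu : ∀ x, HasDerivAt u (u' x) x) (hu' : Continuous u')
    (hv : ∀ x, HasDerivAt v (v' x) x) (hv' : ∀ x, HasDerivAt v' (-μ * v x) x)
    (hua : u a = 0) (hub : u b = 0) :
    ∫ x in a..b, u' x * v' x = μ * ∫ x in a..b, u x * v x := by
  have hv_cont : Continuous v := continuous_iff_continuousAt.2 fun x => (hv x).continuousAt
  have parts := integral_mul_deriv_eq_deriv_mul (fun x _ => hu x) (fun x _ => hv' x)
    (hu'.intervalIntegrable a b) ((continuous_const.mul hv_cont).intervalIntegrable a b)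
  simp only [hua, hub, zero_mul, sub_zero, zero_sub] at parts
  have hleft : ∫ x in a..b, u x * (-μ * v x) = -μ * ∫ x in a..b, u x * v x := by
    rw [← integral_const_mul]; congr 1; ext x; ring
  linarith

theorem integral_deriv_add_mul_mul_deriv_add_mul (c : ℝ)
    (hu : ∀ x, HasDerivAt u (u' x) x) (hu' : Continuous u')
    (hv : ∀ x, HasDerivAt v (v' x) x) (hv' : ∀ x, HasDerivAt v' (-μ * v x) x)
    (hua : u a = 0) (hub : u b = 0) :
    ∫ x in a..b, (u' x + c * u x) * (v' x + c * v x) = (μ + c ^ 2) * ∫ x in a..b, u x * v x := by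
  have hu_cont : Continuous u := continuous_iff_continuousAt.2 fun x => (hu x).continuousAt
  have hv_cont : Continuous v := continuous_iff_continuousAt.2 fun x => (hv x).continuousAt
  have hv'_cont : Continuous v' := continuous_iff_continuousAt.2 fun x => (hv' x).continuousAt
  have cross : ∫ x in a..b, u' x * v x + u x * v' x = 0 := by
    rw [integral_deriv_mul_eq_sub (fun x _ => hu x) (fun x _ => hv x)
      (hu'.intervalIntegrable a b) (hv'_cont.intervalIntegrable a b), hua, hub]
    ring
  have expand : (fun x => (u' x + c * u x) * (v' x + c * v x)) = fun x =>
      (u' x * v' x + c * (u' x * v x + u x * v' x)) + c ^ 2 * (u x * v x) := by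
    ext x; ring
  rw [expand, integral_add, integral_add, integral_const_mul, integral_const_mul, cross,
    integral_deriv_mul_deriv_eq_mul_integral_mul hu hu' hv hv' hua hub]
  · ring
  all_goals apply Continuous.intervalIntegrable; fun_prop

end IntegrationByParts

theorem hasDerivAt_sin_mul (k x : ℝ) :
    HasDerivAt (fun x => sin (k * x)) (k * cos (k * x)) x :=
  (((hasDerivAt_id' x).const_mul k).sin).congr_deriv (by ring)

theorem hasDerivAt_mul_cos_mul (k x : ℝ) :
    HasDerivAt (fun x => k * cos (k * x)) (-k ^ 2 * sin (k * x)) x :=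
  (((hasDerivAt_id' x).const_mul k).cos.const_mul k).congr_deriv (by ring)

theorem integral_sin_nat_mul_sq {n : ℕ} (hn : n ≠ 0) :
    ∫ x in (0 : ℝ)..π, sin (n * x) ^ 2 = π / 2 := by
  have hn' : (n : ℝ) ≠ 0 := Nat.cast_ne_zero.2 hn
  rw [integral_comp_mul_left (fun x => sin x ^ 2) hn', integral_sin_sq, sin_nat_mul_pi]
  simp only [mul_zero, sin_zero, cos_zero, mul_one, zero_mul, sub_self, zero_add, sub_zero,
    smul_eq_mul]
  field_simp

theorem integral_sin_nat_mul_mul_sin_nat_mul {m n : ℕ} (hn : n ≠ 0) :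
    ∫ x in (0 : ℝ)..π, sin (n * x) * sin (m * x) = if n = m then π / 2 else 0 := by
  split_ifs with hnm
  · subst hnm; simp_rw [← sq]; exact integral_sin_nat_mul_sq hn
  have eigen (k l : ℕ) : ∫ x in (0 : ℝ)..π, k * cos (k * x) * (l * cos (l * x)) =
      l ^ 2 * ∫ x in (0 : ℝ)..π, sin (k * x) * sin (l * x) :=
    integral_deriv_mul_deriv_eq_mul_integral_mul (hasDerivAt_sin_mul k) (by fun_prop)
      (hasDerivAt_sin_mul l) (hasDerivAt_mul_cos_mul l) (by simp) (sin_nat_mul_pi k)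
  have swap (f g : ℝ → ℝ) : ∫ x in (0 : ℝ)..π, f x * g x = ∫ x in (0 : ℝ)..π, g x * f x := by
    simp_rw [mul_comm]
  have hsymm := eigen m n
  rw [swap, eigen n m, swap (fun x => sin ((m : ℝ) * x)), ← sub_eq_zero, ← sub_mul] at hsymm
  have hsq : (m : ℝ) ^ 2 - n ^ 2 ≠ 0 := by
    rw [sub_ne_zero, Ne, sq_eq_sq₀ (by positivity) (by positivity)]; exact_mod_cast Ne.symm hnm
  exact (mul_eq_zero.1 hsymm).resolve_left hsq

theorem robinEigen_orthonormal (c : ℝ) :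
    ∀ m n : ℕ, 1 ≤ m → 1 ≤ n →
      ∫ x in (0 : ℝ)..Real.pi, robinEigen c n x * robinEigen c m x =
        if n = m then 1 else 0 := by
  intro m n _ hn
  let α : ℕ → ℝ := fun k => (√((k : ℝ) ^ 2 + c ^ 2))⁻¹ * √(2 / π)
  calc ∫ x in (0 : ℝ)..π, robinEigen c n x * robinEigen c m x
      = α n * α m * ∫ x in (0 : ℝ)..π,
          (n * cos (n * x) + c * sin (n * x)) * (m * cos (m * x) + c * sin (m * x)) := by
        rw [← integral_const_mul]; congr 1; ext x; simp only [robinEigen, α]; ring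
    _ = α n * α m * (((m : ℝ) ^ 2 + c ^ 2) * ∫ x in (0 : ℝ)..π, sin (n * x) * sin (m * x)) := by
        rw [integral_deriv_add_mul_mul_deriv_add_mul c (hasDerivAt_sin_mul n) (by fun_prop)
          (hasDerivAt_sin_mul m) (hasDerivAt_mul_cos_mul m) (by simp) (sin_nat_mul_pi n)]
    _ = if n = m then 1 else 0 := by
        rw [integral_sin_nat_mul_mul_sin_nat_mul (by omega)]
        split_ifs with hnm
        · subst hnm
          have hpos : 0 < (n : ℝ) ^ 2 + c ^ 2 := by positivity
          have hα : α n * α n = ((n : ℝ) ^ 2 + c ^ 2)⁻¹ * (2 / π) := by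
            rw [mul_mul_mul_comm, ← mul_inv, mul_self_sqrt hpos.le, mul_self_sqrt (by positivity)]
          rw [hα]
          field_simp
        · simp
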